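/- arXiv:2407.19076 — 5 statements merged into one kernel-verified Lean document; each statement's English description precedes it below -/
import Mathlib

section
/- For every prime number p, Serre's vertical Sato–Tate measure μ_p has total mass 1; that is, ∫_{-2}^{2} ((p+1)/π) · √(1 − t²/4) / ((p^{1/2} + p^{-1/2})² − t²) dt = 1. -/
/-!
Write `s = √p`, so the denominator is `a² - t²` with `a = s + s⁻¹`, and put `b = s - s⁻¹`, so that
`a² - b² = 4`. The integrand `√(4 - t²) / (2 (a² - t²))` has the elementary primitive
`(arcsin (t / 2) - (b / a) arcsin (b t / (2 √(a² - t²)))) / 2`, which is odd and equals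
`π (1 - b / a) / 4` at `t = 2`. Hence the integral is `π (1 - b / a) / 2 = π / (p + 1)`.
-/

open Real Set MeasureTheory

lemma sqrt_one_sub_sq_div_four (t : ℝ) : √(1 - t ^ 2 / 4) = √(4 - t ^ 2) / 2 := by
  rw [show 1 - t ^ 2 / 4 = (4 - t ^ 2) / 2 ^ 2 by ring, sqrt_div' _ (by positivity),
    sqrt_sq zero_le_two]

lemma hasDerivAt_arcsin_div_two {t : ℝ} (ht : t ^ 2 < 4) :
    HasDerivAt (fun t => arcsin (t / 2)) (1 / √(4 - t ^ 2)) t := by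
  have hq : 0 < √(4 - t ^ 2) := sqrt_pos.mpr (by linarith)
  have h : (t / 2) ^ 2 < 1 := by linarith
  rw [sq_lt_one_iff_abs_lt_one, abs_lt] at h
  refine ((hasDerivAt_arcsin h.1.ne' h.2.ne).comp t ((hasDerivAt_id t).div_const 2)).congr_deriv ?_
  rw [show 1 - (t / 2) ^ 2 = 1 - t ^ 2 / 4 by ring, sqrt_one_sub_sq_div_four]
  field_simp

lemma hasDerivAt_mul_div_two_sqrt_sq_sub_sq {a b t : ℝ} (ht : t ^ 2 < a ^ 2) :
    HasDerivAt (fun t => b * t / (2 * √(a ^ 2 - t ^ 2)))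
      (b * a ^ 2 / (2 * (a ^ 2 - t ^ 2) * √(a ^ 2 - t ^ 2))) t := by
  have hpos : 0 < a ^ 2 - t ^ 2 := by linarith
  have hr : 0 < √(a ^ 2 - t ^ 2) := sqrt_pos.mpr hpos
  have hsq : √(a ^ 2 - t ^ 2) ^ 2 = a ^ 2 - t ^ 2 := sq_sqrt hpos.le
  have hden : HasDerivAt (fun t => a ^ 2 - t ^ 2) (-(2 * t)) t := by
    simpa using (hasDerivAt_pow 2 t).const_sub (a ^ 2)
  refine (((hasDerivAt_id t).const_mul b).div ((hden.sqrt hpos.ne').const_mul 2)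
    (by positivity)).congr_deriv ?_
  rw [id, mul_pow, hsq]
  field_simp
  rw [hsq]
  ring

lemma hasDerivAt_arcsin_mul_div_two_sqrt_sq_sub_sq {a b t : ℝ} (hab : a ^ 2 - b ^ 2 = 4)
    (ha : 0 < a) (ht : t ^ 2 < 4) :
    HasDerivAt (fun t => arcsin (b * t / (2 * √(a ^ 2 - t ^ 2))))
      (a * b / (√(4 - t ^ 2) * (a ^ 2 - t ^ 2))) t := by
  have hpos : 0 < a ^ 2 - t ^ 2 := by nlinarith
  have hr : 0 < √(a ^ 2 - t ^ 2) := sqrt_pos.mpr hpos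
  have hq : 0 < √(4 - t ^ 2) := sqrt_pos.mpr (by linarith)
  have hcos : 1 - (b * t / (2 * √(a ^ 2 - t ^ 2))) ^ 2
      = (a * √(4 - t ^ 2) / (2 * √(a ^ 2 - t ^ 2))) ^ 2 := by
    rw [div_pow, div_pow, mul_pow, mul_pow, mul_pow, sq_sqrt hpos.le, sq_sqrt (by linarith)]
    field_simp
    linear_combination t ^ 2 * hab
  have hg : (b * t / (2 * √(a ^ 2 - t ^ 2))) ^ 2 < 1 := by
    have : 0 < (a * √(4 - t ^ 2) / (2 * √(a ^ 2 - t ^ 2))) ^ 2 := by positivity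
    linarith
  rw [sq_lt_one_iff_abs_lt_one, abs_lt] at hg
  refine ((hasDerivAt_arcsin hg.1.ne' hg.2.ne).comp t
    (hasDerivAt_mul_div_two_sqrt_sq_sub_sq (b := b) (by linarith))).congr_deriv ?_
  rw [hcos, sqrt_sq (by positivity)]
  field_simp

noncomputable def serrePrimitive (a b t : ℝ) : ℝ :=
  (arcsin (t / 2) - b / a * arcsin (b * t / (2 * √(a ^ 2 - t ^ 2)))) / 2

section serrePrimitive

variable {a b : ℝ}

lemma hasDerivAt_serrePrimitive (hab : a ^ 2 - b ^ 2 = 4) (ha : 0 < a) {t : ℝ}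
    (ht : t ^ 2 < 4) :
    HasDerivAt (serrePrimitive a b) (√(1 - t ^ 2 / 4) / (a ^ 2 - t ^ 2)) t := by
  have hpos : 0 < a ^ 2 - t ^ 2 := by nlinarith
  have hq : 0 < √(4 - t ^ 2) := sqrt_pos.mpr (by linarith)
  refine (((hasDerivAt_arcsin_div_two ht).sub
    ((hasDerivAt_arcsin_mul_div_two_sqrt_sq_sub_sq hab ha ht).const_mul (b / a))).div_const
      2).congr_deriv ?_
  rw [sqrt_one_sub_sq_div_four]
  field_simp
  rw [sq_sqrt (by linarith)]
  linear_combination hab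

lemma continuousOn_serrePrimitive (ha : 2 < a) :
    ContinuousOn (serrePrimitive a b) (Icc (-2) 2) := by
  have hden : ∀ t ∈ Icc (-2 : ℝ) 2, 0 < √(a ^ 2 - t ^ 2) := fun t ⟨h₁, h₂⟩ ↦
    sqrt_pos.mpr (by nlinarith)
  unfold serrePrimitive
  fun_prop (disch := intro t ht; have := hden t ht; positivity)

lemma serrePrimitive_neg (t : ℝ) : serrePrimitive a b (-t) = -serrePrimitive a b t := by
  simp only [serrePrimitive, neg_div, mul_neg, neg_sq, arcsin_neg]
  ring

lemma serrePrimitive_two (hab : a ^ 2 - b ^ 2 = 4) (hb : 0 < b) :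
    serrePrimitive a b 2 = π / 4 * (1 - b / a) := by
  rw [serrePrimitive, show a ^ 2 - 2 ^ 2 = b ^ 2 by linarith, sqrt_sq hb.le,
    show b * 2 / (2 * b) = 1 by field_simp, div_self two_ne_zero, arcsin_one]
  ring

end serrePrimitive

theorem integral_sqrt_one_sub_sq_div_four_div_sq_sub_sq {a : ℝ} (ha : 2 < a) :
    ∫ t in (-2 : ℝ)..2, √(1 - t ^ 2 / 4) / (a ^ 2 - t ^ 2) = π / 2 * (1 - √(a ^ 2 - 4) / a) := by
  set b := √(a ^ 2 - 4)
  have hb : 0 < b := sqrt_pos.mpr (by nlinarith)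
  have hab : a ^ 2 - b ^ 2 = 4 := by rw [sq_sqrt (by nlinarith)]; ring
  have hden : ∀ t ∈ Icc (-2 : ℝ) 2, a ^ 2 - t ^ 2 ≠ 0 := fun t ⟨h₁, h₂⟩ ↦ by nlinarith
  have hint : IntervalIntegrable (fun t => √(1 - t ^ 2 / 4) / (a ^ 2 - t ^ 2)) volume (-2) 2 := by
    apply ContinuousOn.intervalIntegrable
    rw [uIcc_of_le (by norm_num)]
    fun_prop (disch := exact hden)
  rw [intervalIntegral.integral_eq_sub_of_hasDerivAt_of_le (by norm_num)
    (continuousOn_serrePrimitive ha)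
    (fun t ⟨h₁, h₂⟩ ↦ hasDerivAt_serrePrimitive hab (by linarith) (by nlinarith)) hint,
    serrePrimitive_neg, serrePrimitive_two hab hb]
  ring

lemma sqrt_add_inv_sq_sub_four {s : ℝ} (hs : 1 ≤ s) : √((s + s⁻¹) ^ 2 - 4) = s - s⁻¹ := by
  have hs0 : s ≠ 0 := by positivity
  rw [show (s + s⁻¹) ^ 2 - 4 = (s - s⁻¹) ^ 2 by field_simp; ring,
    sqrt_sq (sub_nonneg.mpr (inv_le_one_of_one_le₀ hs |>.trans hs))]

lemma two_lt_add_inv {s : ℝ} (hs : 1 < s) : 2 < s + s⁻¹ := by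
  have hs0 : 0 < s := by positivity
  rw [← sub_pos, show s + s⁻¹ - 2 = (s - 1) ^ 2 / s by field_simp; ring]
  have : 0 < s - 1 := by linarith
  positivity

/-- For every prime `p`, Serre's vertical Sato–Tate measure `μ_p` has total mass `1`. -/
theorem serre_measure_total_mass (p : ℕ) (hp : p.Prime) :
    ∫ t in (-2:ℝ)..2,
      (((p : ℝ) + 1) / π) *
        (Real.sqrt (1 - t ^ 2 / 4) /
          (((p : ℝ) ^ ((1 : ℝ) / 2) + (p : ℝ) ^ (-(1 : ℝ) / 2)) ^ 2 - t ^ 2))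
      = 1 := by
  have hs : 1 < √(p : ℝ) := by
    rw [lt_sqrt zero_le_one, one_pow]
    exact_mod_cast hp.one_lt
  have hrpow : (p : ℝ) ^ ((1 : ℝ) / 2) + (p : ℝ) ^ (-(1 : ℝ) / 2) = √p + (√p)⁻¹ := by
    rw [neg_div, rpow_neg p.cast_nonneg, ← sqrt_eq_rpow]
  rw [intervalIntegral.integral_const_mul, hrpow,
    integral_sqrt_one_sub_sq_div_four_div_sq_sub_sq (two_lt_add_inv hs),
    sqrt_add_inv_sq_sub_four hs.le]
  have hsq : √(p : ℝ) ^ 2 = p := sq_sqrt p.cast_nonneg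
  have hs0 : √(p : ℝ) ≠ 0 := by positivity
  field_simp
  rw [hsq]
  ring
end

section
/- For a real number r > 0, the r-th absolute moment of the Sato–Tate measure equals the r-th absolute moment of the CM measure if and only if r = 2; that is, (1/π) ∫_{-2}^{2} |t|^r · √(1 − t²/4) dt = (1/(4π)) ∫_{-2}^{2} |t|^r / √(1 − t²/4) dt holds if and only if r = 2. -/
/-! Differentiating `t |t|^r √(1 - t²/4)` gives `(r + 2) |t|^r √(1 - t²/4) - |t|^r / √(1 - t²/4)`,
and this primitive vanishes at `±2`. Hence the CM moment `(1/4π) ∫ |t|^r / √(1 - t²/4)` is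
`(r + 2)/4` times the Sato–Tate moment `(1/π) ∫ |t|^r √(1 - t²/4)`, which is positive, so the two
agree exactly when `r = 2`. -/

open Real

open MeasureTheory Set

theorem hasDerivAt_mul_abs_rpow (r : ℝ) {t : ℝ} (ht : t ≠ 0) :
    HasDerivAt (fun x : ℝ => x * |x| ^ r) ((r + 1) * |t| ^ r) t := by
  have habs : |t| ≠ 0 := abs_ne_zero.2 ht
  refine (hasDerivAt_id t |>.mul ((hasDerivAt_abs ht).rpow_const (Or.inl habs))).congr_deriv ?_
  rw [Real.rpow_sub_one habs]
  field_simp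
  rw [id, self_mul_sign]
  ring

theorem intervalIntegrable_inv_sqrt_one_sub_sq_div_four :
    IntervalIntegrable (fun t : ℝ => (√(1 - t ^ 2 / 4))⁻¹) volume (-2) 2 := by
  -- `t ↦ 2 arcsin (t / 2)` is a monotone primitive.
  refine intervalIntegral.intervalIntegrable_deriv_of_nonneg (g := fun t => 2 * arcsin (t / 2))
    (by fun_prop) (fun t ht => ?_) (fun t _ => by positivity)
  rw [min_eq_left (by norm_num), max_eq_right (by norm_num)] at ht
  have := ((hasDerivAt_arcsin (x := t / 2) (by linarith [ht.1]) (by linarith [ht.2])).comp t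
    ((hasDerivAt_id t).div_const 2)).const_mul 2
  refine this.congr_deriv ?_
  rw [div_pow]
  norm_num
  ring

theorem intervalIntegrable_abs_rpow_div_sqrt {r : ℝ} (hr : 0 ≤ r) :
    IntervalIntegrable (fun t : ℝ => |t| ^ r / √(1 - t ^ 2 / 4)) volume (-2) 2 := by
  simpa only [div_eq_mul_inv] using intervalIntegrable_inv_sqrt_one_sub_sq_div_four.continuousOn_mul
    (by fun_prop (disch := exact Or.inr hr) : Continuous fun t : ℝ => |t| ^ r).continuousOn

theorem hasDerivAt_mul_abs_rpow_mul_sqrt (r : ℝ) {t : ℝ} (ht : t ∈ Ioo (-2 : ℝ) 2) (ht0 : t ≠ 0) :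
    HasDerivAt (fun x : ℝ => x * |x| ^ r * √(1 - x ^ 2 / 4))
      ((r + 2) * (|t| ^ r * √(1 - t ^ 2 / 4)) - |t| ^ r / √(1 - t ^ 2 / 4)) t := by
  have hu : 0 < 1 - t ^ 2 / 4 := by nlinarith [ht.1, ht.2]
  have hsqrt : HasDerivAt (fun x : ℝ => √(1 - x ^ 2 / 4)) (-(t / 2) / (2 * √(1 - t ^ 2 / 4))) t :=
    (((hasDerivAt_pow 2 t).div_const 4).const_sub 1).sqrt hu.ne' |>.congr_deriv (by ring)
  refine ((hasDerivAt_mul_abs_rpow r ht0).mul hsqrt).congr_deriv ?_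
  have hS : 0 < √(1 - t ^ 2 / 4) := Real.sqrt_pos.2 hu
  have hSS : √(1 - t ^ 2 / 4) ^ 2 = 1 - t ^ 2 / 4 := Real.sq_sqrt hu.le
  generalize √(1 - t ^ 2 / 4) = S at hS hSS ⊢
  field_simp
  linear_combination -4 * hSS

theorem integral_abs_rpow_div_sqrt_eq {r : ℝ} (hr : 0 ≤ r) :
    ∫ t in (-2 : ℝ)..2, |t| ^ r / √(1 - t ^ 2 / 4)
      = (r + 2) * ∫ t in (-2 : ℝ)..2, |t| ^ r * √(1 - t ^ 2 / 4) := by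
  have hsmooth : IntervalIntegrable (fun t : ℝ => |t| ^ r * √(1 - t ^ 2 / 4)) volume (-2) 2 :=
    (by fun_prop (disch := exact Or.inr hr) : Continuous _).intervalIntegrable _ _
  have hsing := intervalIntegrable_abs_rpow_div_sqrt hr
  have hftc : ∫ t in (-2 : ℝ)..2,
      ((r + 2) * (|t| ^ r * √(1 - t ^ 2 / 4)) - |t| ^ r / √(1 - t ^ 2 / 4)) = 0 := by
    rw [integral_eq_of_hasDerivAt_off_countable_of_le
      (fun x : ℝ => x * |x| ^ r * √(1 - x ^ 2 / 4)) _ (by norm_num) (countable_singleton 0)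
      (by fun_prop (disch := exact Or.inr hr) : Continuous _).continuousOn
      (fun t ht => hasDerivAt_mul_abs_rpow_mul_sqrt r ht.1 ht.2) ((hsmooth.const_mul _).sub hsing)]
    norm_num
  rw [intervalIntegral.integral_sub (hsmooth.const_mul _) hsing,
    intervalIntegral.integral_const_mul, sub_eq_zero] at hftc
  exact hftc.symm

theorem integral_abs_rpow_mul_sqrt_pos {r : ℝ} (hr : 0 ≤ r) :
    0 < ∫ t in (-2 : ℝ)..2, |t| ^ r * √(1 - t ^ 2 / 4) :=
  intervalIntegral.integral_pos (by norm_num)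
    (by fun_prop (disch := exact Or.inr hr) : Continuous _).continuousOn
    (fun t _ => by positivity) ⟨1, by norm_num, by norm_num⟩

/-- For a real `r > 0`, the `r`-th absolute moment of the Sato–Tate measure equals the
`r`-th absolute moment of the CM measure if and only if `r = 2`. -/
theorem satoTate_moment_eq_cm_moment_iff (r : ℝ) (hr : 0 < r) :
    (1 / π) * ∫ t in (-2:ℝ)..2, |t| ^ r * Real.sqrt (1 - t ^ 2 / 4)
      = (1 / (4 * π)) * ∫ t in (-2:ℝ)..2, |t| ^ r / Real.sqrt (1 - t ^ 2 / 4)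
    ↔ r = 2 := by
  have hS := integral_abs_rpow_mul_sqrt_pos hr.le
  rw [integral_abs_rpow_div_sqrt_eq hr.le]
  set S := ∫ t in (-2:ℝ)..2, |t| ^ r * Real.sqrt (1 - t ^ 2 / 4)
  rw [show (1 / (4 * π)) * ((r + 2) * S) = (1 / π * S) * ((r + 2) / 4) by ring, eq_comm,
    mul_eq_left₀ (by positivity), div_eq_one_iff_eq four_ne_zero]
  constructor <;> intro h <;> linarith
end

section
/- For every real r > 0, the r-th absolute moment of the Sato–Tate measure has the closed form (1/π) ∫_{-2}^{2} |t|^r · √(1 − t²/4) dt = (2^r / √π) · Γ((r+1)/2) / Γ((r+4)/2), where Γ denotes the Gamma function. -/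
/-!
By evenness the integral is twice the integral over `[0, 2]`. The scaling `t = 2u` and then the
substitution `v = u²` turn that into `2^(r+1) · ½ · B((r+1)/2, 3/2)`, and the Beta integral
`B(a, b) = Γ(a) Γ(b) / Γ(a + b)` together with `Γ(3/2) = √π / 2` gives the closed form.
-/

open Real MeasureTheory Set

theorem intervalIntegral_neg_eq_two_mul_of_even {f : ℝ → ℝ} (hf : ∀ x, f (-x) = f x) {c : ℝ}
    (hint : IntervalIntegrable f volume 0 c) :
    ∫ x in -c..c, f x = 2 * ∫ x in (0:ℝ)..c, f x := by
  have hint' : IntervalIntegrable f volume (-c) 0 := by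
    simpa [hf] using ((IntervalIntegrable.iff_comp_neg (a := 0) (b := c) (f := f)).mp hint).symm
  rw [← intervalIntegral.integral_add_adjacent_intervals hint' hint, two_mul]
  congr 1
  simpa [hf] using (intervalIntegral.integral_comp_neg (a := 0) (b := c) f).symm

theorem intervalIntegral_rpow_mul_one_sub_div_sq_rpow_eq_rpow_mul {c : ℝ} (hc : 0 < c) (p q : ℝ) :
    ∫ t in (0:ℝ)..c, t ^ p * (1 - (t / c) ^ 2) ^ q
      = c ^ (p + 1) * ∫ u in (0:ℝ)..1, u ^ p * (1 - u ^ 2) ^ q := by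
  have hscale : ∀ t ∈ uIcc 0 c, t ^ p * (1 - (t / c) ^ 2) ^ q
      = c ^ p * ((t / c) ^ p * (1 - (t / c) ^ 2) ^ q) := by
    intro t ht
    rw [uIcc_of_le hc.le] at ht
    rw [div_rpow ht.1 hc.le]
    field_simp
  rw [intervalIntegral.integral_congr hscale, intervalIntegral.integral_const_mul,
    intervalIntegral.integral_comp_div (fun u => u ^ p * (1 - u ^ 2) ^ q) hc.ne', zero_div,
    div_self hc.ne', rpow_add_one hc.ne', smul_eq_mul]
  ring

theorem intervalIntegral_rpow_mul_one_sub_sq_rpow_eq_half_mul (p q : ℝ) :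
    ∫ u in (0:ℝ)..1, u ^ p * (1 - u ^ 2) ^ q
      = (1 / 2) * ∫ v in (0:ℝ)..1, v ^ ((p - 1) / 2) * (1 - v) ^ q := by
  have hmono : StrictMonoOn (fun u : ℝ => u ^ 2) (Ici 0) := pow_left_strictMonoOn₀ two_ne_zero
  have himage : (fun u : ℝ => u ^ 2) '' Ioo 0 1 = Ioo 0 1 := by
    simpa using (continuous_pow 2).continuousOn.image_Ioo_of_strictMonoOn zero_le_one
      (hmono.mono Icc_subset_Ici_self)
  have hsubst := integral_image_eq_integral_abs_deriv_smul (measurableSet_Ioo (a := 0) (b := 1))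
    (f' := fun u => 2 * u)
    (fun u _ => ((hasDerivAt_pow 2 u).congr_deriv (by ring)).hasDerivWithinAt)
    (hmono.injOn.mono fun _ hu => le_of_lt hu.1) (fun v => v ^ ((p - 1) / 2) * (1 - v) ^ q)
  rw [himage] at hsubst
  simp only [intervalIntegral.integral_of_le zero_le_one, integral_Ioc_eq_integral_Ioo, hsubst,
    ← integral_const_mul]
  refine setIntegral_congr_fun measurableSet_Ioo fun u ⟨hu0, _⟩ => ?_
  have hpow : (u ^ 2) ^ ((p - 1) / 2) * u = u ^ p := by
    rw [← rpow_natCast, ← rpow_mul hu0.le, ← rpow_add_one hu0.ne']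
    congr 1; push_cast; ring
  rw [smul_eq_mul, abs_of_pos (by positivity), ← hpow]
  ring

theorem intervalIntegral_rpow_mul_one_sub_rpow_eq_Gamma {a b : ℝ} (ha : 0 < a) (hb : 0 < b) :
    ∫ x in (0:ℝ)..1, x ^ (a - 1) * (1 - x) ^ (b - 1) = Gamma a * Gamma b / Gamma (a + b) := by
  apply Complex.ofReal_injective
  push_cast [← Complex.Gamma_ofReal]
  rw [← Complex.betaIntegral_eq_Gamma_mul_div a b (by simpa) (by simpa), Complex.betaIntegral,
    ← intervalIntegral.integral_ofReal]
  refine intervalIntegral.integral_congr fun x hx => ?_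
  rw [uIcc_of_le zero_le_one] at hx
  push_cast
  rw [Complex.ofReal_cpow hx.1, Complex.ofReal_cpow (sub_nonneg.2 hx.2)]
  push_cast
  ring

theorem intervalIntegral_rpow_mul_one_sub_sq_rpow_eq_Gamma {p q : ℝ} (hp : -1 < p) (hq : -1 < q) :
    ∫ u in (0:ℝ)..1, u ^ p * (1 - u ^ 2) ^ q
      = Gamma ((p + 1) / 2) * Gamma (q + 1) / (2 * Gamma ((p + 1) / 2 + (q + 1))) := by
  have hbeta := intervalIntegral_rpow_mul_one_sub_rpow_eq_Gamma (a := (p + 1) / 2) (b := q + 1)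
    (by linarith) (by linarith)
  rw [show (p + 1) / 2 - 1 = (p - 1) / 2 by ring, add_sub_cancel_right] at hbeta
  rw [intervalIntegral_rpow_mul_one_sub_sq_rpow_eq_half_mul, hbeta]
  ring

/-- Closed form for the `r`-th absolute moment of the Sato–Tate measure. -/
theorem satoTate_moment_closed_form (r : ℝ) (hr : 0 < r) :
    (1 / π) * ∫ t in (-2:ℝ)..2, |t| ^ r * Real.sqrt (1 - t ^ 2 / 4)
      = ((2 : ℝ) ^ r / Real.sqrt π) * (Real.Gamma ((r + 1) / 2) / Real.Gamma ((r + 4) / 2)) := by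
  have hcont : Continuous fun t : ℝ => |t| ^ r * √(1 - t ^ 2 / 4) :=
    (continuous_abs.rpow_const fun _ => Or.inr hr.le).mul (by fun_prop)
  have hpos_half : ∫ t in (0:ℝ)..2, |t| ^ r * √(1 - t ^ 2 / 4)
      = ∫ t in (0:ℝ)..2, t ^ r * (1 - (t / 2) ^ 2) ^ (1 / 2 : ℝ) := by
    refine intervalIntegral.integral_congr fun t ht => ?_
    rw [uIcc_of_le zero_le_two] at ht
    rw [abs_of_nonneg ht.1, sqrt_eq_rpow]
    ring_nf
  have hGamma : Gamma (3 / 2) = √π / 2 := by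
    rw [show (3 / 2 : ℝ) = 1 / 2 + 1 by norm_num, Gamma_add_one (by norm_num), Gamma_one_half_eq]
    ring
  rw [intervalIntegral_neg_eq_two_mul_of_even (by simp) (hcont.intervalIntegrable 0 2), hpos_half,
    intervalIntegral_rpow_mul_one_sub_div_sq_rpow_eq_rpow_mul two_pos,
    intervalIntegral_rpow_mul_one_sub_sq_rpow_eq_Gamma (by linarith) (by norm_num),
    show (1 / 2 : ℝ) + 1 = 3 / 2 by norm_num, show (r + 1) / 2 + 3 / 2 = (r + 4) / 2 by ring,
    hGamma, rpow_add_one two_ne_zero]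
  field_simp
  exact sq_sqrt pi_pos.le
end

section
/- For every natural number N ≥ 150000, one has 2^{ω(N)} ≤ 0.000147 · ψ(N), where ω(N) is the number of distinct prime divisors of N and ψ(N) = N · ∏_{p | N, p prime} (1 + 1/p). -/
/-!
Since `ψ(N) = (N / rad N) · ∏_{p ∣ N} (p + 1)`, the claim is the integer inequality
`10⁶ · 2^ω(N) ≤ 147 · (N / rad N) · ∏_{p ∣ N} (p + 1)`. Each prime factor `p ≥ 37` gains a
factor `(p + 1) / 2 ≥ 19` on the right, so three of them suffice (`147 · 19³ > 10⁶`). With at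
most two, `ψ(N)` is bounded below either by `150000 · ∏ (1 + 1/p)` over the prime factors below
`37`, or by `(N / rad N) · ∏ (p + 1)` with each large `p + 1` replaced by `38`; one of these two
bounds wins for every set of small prime factors, which is checked by evaluation. The margin is
thin: `N = 152490 = 2 · 3 · 5 · 13 · 17 · 23` has `ψ(N) / 2^ω(N) = 6804 > 10⁶ / 147`.
-/

open Finset

lemma prod_mul_prod_one_add_inv {S : Finset ℕ} (hS : ∀ p ∈ S, p ≠ 0) :
    (∏ p ∈ S, (p : ℝ)) * ∏ p ∈ S, (1 + 1 / (p : ℝ)) = ∏ p ∈ S, ((p : ℝ) + 1) := by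
  rw [← prod_mul_distrib]
  refine prod_congr rfl fun p hp => ?_
  have : (p : ℝ) ≠ 0 := by exact_mod_cast hS p hp
  field_simp

/- `W` is the set of prime factors below `37` and `b` the number of the others. When `b = 0`,
`150000 ⌈/⌉ ∏ p ∈ W, p` is the least admissible value of `N / rad N`. -/
theorem two_pow_card_le_of_subset_primesBelow_37 : ∀ W ⊆ Nat.primesBelow 37, ∀ b ≤ 2,
    10 ^ 6 * 2 ^ (#W + b) * ∏ p ∈ W, p ≤ 147 * 150000 * ∏ p ∈ W, (p + 1) ∨
    10 ^ 6 * 2 ^ (#W + b) ≤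
      147 * (if b = 0 then 150000 ⌈/⌉ ∏ p ∈ W, p else 1) * (∏ p ∈ W, (p + 1)) * 38 ^ b := by
  decide +kernel

section

variable {W L : Finset ℕ} {m : ℕ}

lemma two_pow_card_le_of_three_le_card (hW : ∀ p ∈ W, 1 ≤ p) (hL : ∀ p ∈ L, 37 ≤ p) (hL3 : 3 ≤ #L)
    (hm : 1 ≤ m) :
    10 ^ 6 * 2 ^ (#W + #L) ≤ 147 * m * ((∏ p ∈ W, (p + 1)) * ∏ p ∈ L, (p + 1)) := by
  have hW2 : 2 ^ #W ≤ ∏ p ∈ W, (p + 1) :=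
    pow_card_le_prod _ _ _ fun p hp => Nat.succ_le_succ (hW p hp)
  have hL38 : 38 ^ #L ≤ ∏ p ∈ L, (p + 1) :=
    pow_card_le_prod _ _ _ fun p hp => Nat.succ_le_succ (hL p hp)
  have h19 : 10 ^ 6 ≤ 147 * 19 ^ #L :=
    le_trans (by norm_num) (Nat.mul_le_mul_left 147 (Nat.pow_le_pow_right (by norm_num) hL3))
  calc 10 ^ 6 * 2 ^ (#W + #L) = 2 ^ #W * (10 ^ 6 * 2 ^ #L) := by ring
    _ ≤ (∏ p ∈ W, (p + 1)) * (147 * 19 ^ #L * 2 ^ #L) := by gcongr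
    _ = 147 * 1 * ((∏ p ∈ W, (p + 1)) * 38 ^ #L) := by rw [show 38 = 19 * 2 by rfl, mul_pow]; ring
    _ ≤ 147 * m * ((∏ p ∈ W, (p + 1)) * ∏ p ∈ L, (p + 1)) := by gcongr

lemma two_pow_card_le_of_card_le_two (hW : W ⊆ Nat.primesBelow 37) (hL : ∀ p ∈ L, 37 ≤ p)
    (hL2 : #L ≤ 2) (hm : 1 ≤ m) (hN : 150000 ≤ m * ((∏ p ∈ W, p) * ∏ p ∈ L, p)) :
    10 ^ 6 * 2 ^ (#W + #L) ≤ 147 * m * ((∏ p ∈ W, (p + 1)) * ∏ p ∈ L, (p + 1)) := by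
  have hPL : ∏ p ∈ L, p ≤ ∏ p ∈ L, (p + 1) := prod_le_prod' fun p _ => p.le_succ
  have hPW : 0 < ∏ p ∈ W, p :=
    prod_pos fun p hp => (Nat.mem_primesBelow.mp (hW hp)).2.pos
  have hPL0 : 0 < ∏ p ∈ L, p := prod_pos fun p hp => by linarith [hL p hp]
  rcases two_pow_card_le_of_subset_primesBelow_37 W hW #L hL2 with hR | hA
  · refine Nat.le_of_mul_le_mul_right ?_ (Nat.mul_pos hPW hPL0)
    calc 10 ^ 6 * 2 ^ (#W + #L) * ((∏ p ∈ W, p) * ∏ p ∈ L, p)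
        = 10 ^ 6 * 2 ^ (#W + #L) * (∏ p ∈ W, p) * ∏ p ∈ L, p := by ring
      _ ≤ 147 * 150000 * (∏ p ∈ W, (p + 1)) * ∏ p ∈ L, (p + 1) := by gcongr
      _ ≤ 147 * (m * ((∏ p ∈ W, p) * ∏ p ∈ L, p)) * (∏ p ∈ W, (p + 1)) * ∏ p ∈ L, (p + 1) := by
        gcongr
      _ = 147 * m * ((∏ p ∈ W, (p + 1)) * ∏ p ∈ L, (p + 1)) * ((∏ p ∈ W, p) * ∏ p ∈ L, p) := by
        ring
  · have hmin : (if #L = 0 then 150000 ⌈/⌉ ∏ p ∈ W, p else 1) ≤ m := by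
      split_ifs with hL0
      · rw [card_eq_zero.mp hL0, prod_empty, mul_one] at hN
        exact (ceilDiv_le_iff_le_mul hPW).mpr (by linarith)
      · exact hm
    have hL38 : 38 ^ #L ≤ ∏ p ∈ L, (p + 1) :=
      pow_card_le_prod _ _ _ fun p hp => Nat.succ_le_succ (hL p hp)
    calc 10 ^ 6 * 2 ^ (#W + #L)
        ≤ 147 * (if #L = 0 then 150000 ⌈/⌉ ∏ p ∈ W, p else 1) * (∏ p ∈ W, (p + 1)) * 38 ^ #L := hA
      _ ≤ 147 * m * (∏ p ∈ W, (p + 1)) * ∏ p ∈ L, (p + 1) := by gcongr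
      _ = 147 * m * ((∏ p ∈ W, (p + 1)) * ∏ p ∈ L, (p + 1)) := by ring

end

lemma two_pow_card_le_of_forall_prime {S : Finset ℕ} (hS : ∀ p ∈ S, p.Prime) {m : ℕ} (hm : 1 ≤ m)
    (hN : 150000 ≤ m * ∏ p ∈ S, p) :
    10 ^ 6 * 2 ^ #S ≤ 147 * m * ∏ p ∈ S, (p + 1) := by
  rw [← card_filter_add_card_filter_not (· < 37), ← prod_filter_mul_prod_filter_not S (· < 37)]
  rw [← prod_filter_mul_prod_filter_not S (· < 37)] at hN
  have hL : ∀ p ∈ S.filter (¬ · < 37), 37 ≤ p := fun p hp => not_lt.mp (mem_filter.mp hp).2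
  rcases le_or_gt 3 #(S.filter (¬ · < 37)) with h3 | h2
  · exact two_pow_card_le_of_three_le_card
      (fun p hp => (hS p (mem_filter.mp hp).1).one_le) hL h3 hm
  · refine two_pow_card_le_of_card_le_two (fun p hp => ?_) hL (by omega) hm hN
    obtain ⟨hpS, hp37⟩ := mem_filter.mp hp
    exact Nat.mem_primesBelow.mpr ⟨hp37, hS p hpS⟩

/-- For every natural number `N ≥ 150000`, `2^{ω(N)} ≤ 0.000147 · ψ(N)`, where `ω(N)` is
the number of distinct prime divisors of `N` and `ψ(N) = N · ∏_{p ∣ N} (1 + 1/p)`. -/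
theorem two_pow_omega_le (N : ℕ) (hN : 150000 ≤ N) :
    (2 : ℝ) ^ N.primeFactors.card
      ≤ 0.000147 * ((N : ℝ) * ∏ p ∈ N.primeFactors, (1 + 1 / (p : ℝ))) := by
  have hS : ∀ p ∈ N.primeFactors, p.Prime := fun p hp => Nat.prime_of_mem_primeFactors hp
  obtain ⟨m, hNm⟩ := Nat.prod_primeFactors_dvd N
  have hm : 1 ≤ m := Nat.pos_of_ne_zero fun h => by simp [h] at hNm; omega
  have hψ : (N : ℝ) * ∏ p ∈ N.primeFactors, (1 + 1 / (p : ℝ))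
      = m * ∏ p ∈ N.primeFactors, ((p : ℝ) + 1) := by
    have hNR : (N : ℝ) = (∏ p ∈ N.primeFactors, (p : ℝ)) * m := by
      simpa using congrArg (Nat.cast : ℕ → ℝ) hNm
    rw [hNR, mul_comm _ (m : ℝ), mul_assoc,
      prod_mul_prod_one_add_inv fun p hp => (hS p hp).ne_zero]
  have key : ((10 ^ 6 * 2 ^ N.primeFactors.card : ℕ) : ℝ)
      ≤ ((147 * m * ∏ p ∈ N.primeFactors, (p + 1) : ℕ) : ℝ) :=
    Nat.cast_le.mpr (two_pow_card_le_of_forall_prime hS hm (by rw [mul_comm, ← hNm]; exact hN))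
  push_cast at key
  rw [hψ]
  linarith
end

section
/- For every natural number N ≥ 150000, one has 2^{ω(N)} · √N ≤ 0.0607 · ψ(N), where ω(N) is the number of distinct prime divisors of N and ψ(N) = N · ∏_{p | N, p prime} (1 + 1/p). -/
/-!
Let `s` be the set of prime factors of `N` and `w(p) = 2p/(p+1)` (`psiWeight`). Since
`ψ(N)/N = ∏_{p∈s} (1 + 1/p)`, we have `2^ω(N) · N/ψ(N) = ∏_{p∈s} w(p)`, so it suffices that
`(∏ w(p))² ≤ c²N` with `c = 0.0607`. As `N ≥ max(150000, ∏_{p∈s} p)`, this holds as soon as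
`∏ w(p) ≤ 23.5` (because `23.5² ≤ c² · 150000`) or `∏ w(p)²/p ≤ c²`. The first product
increases and the second decreases in each prime, so a short branch-and-bound on the sizes of
the sorted primes `p₀ < p₁ < ⋯` always lands in one of the two cases.
-/

open Real Finset

theorem Nat.Prime.le_of_lt_of_forall_not_prime {p a b : ℕ} (hp : p.Prime) (hpb : p < b)
    (hgap : ∀ n ∈ Ioo a b, ¬n.Prime := by decide) : p ≤ a := by
  by_contra! hap
  exact hgap p (mem_Ioo.2 ⟨hap, hpb⟩) hp

theorem Nat.Prime.le_of_gt_of_forall_not_prime {p a b : ℕ} (hp : p.Prime) (hap : a < p)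
    (hgap : ∀ n ∈ Ioo a b, ¬n.Prime := by decide) : b ≤ p := by
  by_contra! hpb
  exact hgap p (mem_Ioo.2 ⟨hap, hpb⟩) hp

theorem Finset.prod_eq_prod_orderEmbOfFin {α M : Type*} [LinearOrder α] [CommMonoid M]
    (s : Finset α) {k : ℕ} (h : #s = k) (f : α → M) :
    ∏ a ∈ s, f a = ∏ i, f (s.orderEmbOfFin h i) := by
  conv_lhs => rw [← s.image_orderEmbOfFin_univ h]
  exact prod_image fun _ _ _ _ hij => (s.orderEmbOfFin h).injective hij

-- Reducible so that `positivity` and `norm_num` see through these two definitions.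
noncomputable abbrev psiWeight (p : ℕ) : ℝ := 2 * p / (p + 1)

noncomputable abbrev psiWeightSqDiv (p : ℕ) : ℝ := psiWeight p ^ 2 / p

theorem psiWeight_le_two (p : ℕ) : psiWeight p ≤ 2 := by
  rw [div_le_iff₀ (by positivity)]
  linarith

@[gcongr]
theorem psiWeight_le_psiWeight {p q : ℕ} (hpq : p ≤ q) : psiWeight p ≤ psiWeight q := by
  have : (p : ℝ) ≤ q := by exact_mod_cast hpq
  rw [div_le_div_iff₀ (by positivity) (by positivity)]
  nlinarith

theorem psiWeightSqDiv_eq (p : ℕ) (hp : p ≠ 0) : psiWeightSqDiv p = 4 * p / (p + 1) ^ 2 := by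
  have : (p : ℝ) ≠ 0 := by exact_mod_cast hp
  field_simp
  norm_num

theorem psiWeightSqDiv_le_one (p : ℕ) : psiWeightSqDiv p ≤ 1 := by
  rcases eq_or_ne p 0 with rfl | hp
  · norm_num
  rw [psiWeightSqDiv_eq p hp, div_le_one (by positivity)]
  nlinarith [sq_nonneg ((p : ℝ) - 1)]

@[gcongr]
theorem psiWeightSqDiv_le_psiWeightSqDiv {p q : ℕ} (hq : 0 < q) (hqp : q ≤ p) :
    psiWeightSqDiv p ≤ psiWeightSqDiv q := by
  have hq' : (1 : ℝ) ≤ q := by exact_mod_cast hq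
  have hqp' : (q : ℝ) ≤ p := by exact_mod_cast hqp
  rw [psiWeightSqDiv_eq p (by omega), psiWeightSqDiv_eq q hq.ne',
    div_le_div_iff₀ (by positivity) (by positivity)]
  have hpq : (0 : ℝ) ≤ p * q - 1 := by nlinarith
  nlinarith [mul_nonneg (sub_nonneg.2 hqp') hpq]

theorem psiWeight_dichotomy_five (p : Fin 5 → ℕ) (hp : ∀ i, (p i).Prime)
    (hmono : StrictMono p) :
    ∏ i, psiWeight (p i) ≤ 23.5 ∨ ∏ i, psiWeightSqDiv (p i) ≤ 0.0607 ^ 2 := by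
  simp only [Fin.prod_univ_five]
  have h₀₁ : p 0 < p 1 := hmono (by decide)
  have h₁₂ : p 1 < p 2 := hmono (by decide)
  have h₂₃ : p 2 < p 3 := hmono (by decide)
  have h₃₄ : p 3 < p 4 := hmono (by decide)
  by_cases h₁ : p 1 ≤ 7
  · left
    have : p 0 ≤ 5 := (hp 0).le_of_lt_of_forall_not_prime (by omega : p 0 < 7)
    calc _ ≤ psiWeight 5 * psiWeight 7 * 2 * 2 * 2 := by gcongr <;> exact psiWeight_le_two _
      _ ≤ 23.5 := by norm_num
  · right
    have := (hp 0).two_le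
    have : 11 ≤ p 1 := (hp 1).le_of_gt_of_forall_not_prime (by omega : 7 < p 1)
    have : 13 ≤ p 2 := (hp 2).le_of_gt_of_forall_not_prime (by omega : 11 < p 2)
    have : 17 ≤ p 3 := (hp 3).le_of_gt_of_forall_not_prime (by omega : 13 < p 3)
    have : 19 ≤ p 4 := (hp 4).le_of_gt_of_forall_not_prime (by omega : 17 < p 4)
    calc _ ≤ psiWeightSqDiv 2 * psiWeightSqDiv 11 * psiWeightSqDiv 13 * psiWeightSqDiv 17 *
          psiWeightSqDiv 19 := by gcongr
      _ ≤ 0.0607 ^ 2 := by norm_num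

theorem psiWeight_dichotomy_six (p : Fin 6 → ℕ) (hp : ∀ i, (p i).Prime)
    (hmono : StrictMono p) :
    ∏ i, psiWeight (p i) ≤ 23.5 ∨ ∏ i, psiWeightSqDiv (p i) ≤ 0.0607 ^ 2 := by
  simp only [Fin.prod_univ_six]
  have h₀₁ : p 0 < p 1 := hmono (by decide)
  have h₁₂ : p 1 < p 2 := hmono (by decide)
  have h₂₃ : p 2 < p 3 := hmono (by decide)
  have h₃₄ : p 3 < p 4 := hmono (by decide)
  have h₄₅ : p 4 < p 5 := hmono (by decide)
  have := (hp 0).two_le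
  have : 3 ≤ p 1 := by omega
  have : 5 ≤ p 2 := (hp 2).le_of_gt_of_forall_not_prime (by omega : 3 < p 2)
  have : 7 ≤ p 3 := (hp 3).le_of_gt_of_forall_not_prime (by omega : 5 < p 3)
  have : 11 ≤ p 4 := (hp 4).le_of_gt_of_forall_not_prime (by omega : 7 < p 4)
  have : 13 ≤ p 5 := (hp 5).le_of_gt_of_forall_not_prime (by omega : 11 < p 5)
  by_cases h₅ : p 5 ≤ 29
  · by_cases h₄ : p 4 ≤ 13
    · by_cases h₁ : p 1 ≤ 3
      · left
        have : p 3 ≤ 11 := (hp 3).le_of_lt_of_forall_not_prime (by omega : p 3 < 13)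
        have : p 2 ≤ 7 := (hp 2).le_of_lt_of_forall_not_prime (by omega : p 2 < 11)
        have : p 0 ≤ 2 := by omega
        calc _ ≤ psiWeight 2 * psiWeight 3 * psiWeight 7 * psiWeight 11 * psiWeight 13 *
              psiWeight 29 := by gcongr
          _ ≤ 23.5 := by norm_num
      · -- Nearly sharp: `N = 170170 = 2·5·7·11·13·17` gives `2^ω(N)·√N/ψ(N) ≈ 0.06063`.
        right
        have : 5 ≤ p 1 := (hp 1).le_of_gt_of_forall_not_prime (by omega : 3 < p 1)
        have : 7 ≤ p 2 := (hp 2).le_of_gt_of_forall_not_prime (by omega : 5 < p 2)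
        have : 11 ≤ p 3 := (hp 3).le_of_gt_of_forall_not_prime (by omega : 7 < p 3)
        have : 13 ≤ p 4 := (hp 4).le_of_gt_of_forall_not_prime (by omega : 11 < p 4)
        have : 17 ≤ p 5 := (hp 5).le_of_gt_of_forall_not_prime (by omega : 13 < p 5)
        calc _ ≤ psiWeightSqDiv 2 * psiWeightSqDiv 5 * psiWeightSqDiv 7 * psiWeightSqDiv 11 *
              psiWeightSqDiv 13 * psiWeightSqDiv 17 := by gcongr
          _ ≤ 0.0607 ^ 2 := by norm_num
    · have : 17 ≤ p 4 := (hp 4).le_of_gt_of_forall_not_prime (by omega : 13 < p 4)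
      by_cases h₂ : p 2 ≤ 5
      · left
        have : p 4 ≤ 23 := (hp 4).le_of_lt_of_forall_not_prime (by omega : p 4 < 29)
        have : p 3 ≤ 19 := (hp 3).le_of_lt_of_forall_not_prime (by omega : p 3 < 23)
        have : p 1 ≤ 3 := (hp 1).le_of_lt_of_forall_not_prime (by omega : p 1 < 5)
        have : p 0 ≤ 2 := by omega
        calc _ ≤ psiWeight 2 * psiWeight 3 * psiWeight 5 * psiWeight 19 * psiWeight 23 *
              psiWeight 29 := by gcongr
          _ ≤ 23.5 := by norm_num
      · right
        have : 7 ≤ p 2 := (hp 2).le_of_gt_of_forall_not_prime (by omega : 5 < p 2)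
        have : 11 ≤ p 3 := (hp 3).le_of_gt_of_forall_not_prime (by omega : 7 < p 3)
        have : 19 ≤ p 5 := (hp 5).le_of_gt_of_forall_not_prime (by omega : 17 < p 5)
        calc _ ≤ psiWeightSqDiv 2 * psiWeightSqDiv 3 * psiWeightSqDiv 7 * psiWeightSqDiv 11 *
              psiWeightSqDiv 17 * psiWeightSqDiv 19 := by gcongr
          _ ≤ 0.0607 ^ 2 := by norm_num
  · by_cases h₃ : p 3 ≤ 7
    · left
      have : p 2 ≤ 5 := (hp 2).le_of_lt_of_forall_not_prime (by omega : p 2 < 7)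
      have : p 1 ≤ 3 := (hp 1).le_of_lt_of_forall_not_prime (by omega : p 1 < 5)
      have : p 0 ≤ 2 := by omega
      calc _ ≤ psiWeight 2 * psiWeight 3 * psiWeight 5 * psiWeight 7 * 2 * 2 := by
            gcongr <;> exact psiWeight_le_two _
        _ ≤ 23.5 := by norm_num
    · right
      have : 11 ≤ p 3 := (hp 3).le_of_gt_of_forall_not_prime (by omega : 7 < p 3)
      have : 13 ≤ p 4 := (hp 4).le_of_gt_of_forall_not_prime (by omega : 11 < p 4)
      have : 31 ≤ p 5 := (hp 5).le_of_gt_of_forall_not_prime (by omega : 29 < p 5)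
      calc _ ≤ psiWeightSqDiv 2 * psiWeightSqDiv 3 * psiWeightSqDiv 5 * psiWeightSqDiv 11 *
            psiWeightSqDiv 13 * psiWeightSqDiv 31 := by gcongr
        _ ≤ 0.0607 ^ 2 := by norm_num

theorem prod_psiWeightSqDiv_fin_seven_le (p : Fin 7 → ℕ) (hp : ∀ i, (p i).Prime)
    (hmono : StrictMono p) : ∏ i, psiWeightSqDiv (p i) ≤ 0.0607 ^ 2 := by
  simp only [Fin.prod_univ_seven]
  have h₀₁ : p 0 < p 1 := hmono (by decide)
  have h₁₂ : p 1 < p 2 := hmono (by decide)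
  have h₂₃ : p 2 < p 3 := hmono (by decide)
  have h₃₄ : p 3 < p 4 := hmono (by decide)
  have h₄₅ : p 4 < p 5 := hmono (by decide)
  have h₅₆ : p 5 < p 6 := hmono (by decide)
  have := (hp 0).two_le
  have : 3 ≤ p 1 := by omega
  have : 5 ≤ p 2 := (hp 2).le_of_gt_of_forall_not_prime (by omega : 3 < p 2)
  have : 7 ≤ p 3 := (hp 3).le_of_gt_of_forall_not_prime (by omega : 5 < p 3)
  have : 11 ≤ p 4 := (hp 4).le_of_gt_of_forall_not_prime (by omega : 7 < p 4)
  have : 13 ≤ p 5 := (hp 5).le_of_gt_of_forall_not_prime (by omega : 11 < p 5)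
  have : 17 ≤ p 6 := (hp 6).le_of_gt_of_forall_not_prime (by omega : 13 < p 6)
  calc _ ≤ psiWeightSqDiv 2 * psiWeightSqDiv 3 * psiWeightSqDiv 5 * psiWeightSqDiv 7 *
        psiWeightSqDiv 11 * psiWeightSqDiv 13 * psiWeightSqDiv 17 := by gcongr
    _ ≤ 0.0607 ^ 2 := by norm_num

theorem psiWeight_dichotomy (s : Finset ℕ) (hs : ∀ p ∈ s, p.Prime) :
    ∏ p ∈ s, psiWeight p ≤ 23.5 ∨ ∏ p ∈ s, psiWeightSqDiv p ≤ 0.0607 ^ 2 := by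
  have hsorted {k : ℕ} (hk : #s = k) : ∀ i, (s.orderEmbOfFin hk i).Prime :=
    fun i => hs _ (s.orderEmbOfFin_mem hk i)
  obtain hk | hk | hk | hk : #s ≤ 4 ∨ #s = 5 ∨ #s = 6 ∨ 7 ≤ #s := by omega
  · left
    calc ∏ p ∈ s, psiWeight p ≤ ∏ _p ∈ s, 2 :=
          prod_le_prod (fun _ _ => by positivity) fun p _ => psiWeight_le_two p
      _ = 2 ^ #s := prod_const 2
      _ ≤ 2 ^ 4 := pow_le_pow_right₀ one_le_two hk
      _ ≤ 23.5 := by norm_num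
  · simp only [s.prod_eq_prod_orderEmbOfFin hk]
    exact psiWeight_dichotomy_five _ (hsorted hk) (s.orderEmbOfFin hk).strictMono
  · simp only [s.prod_eq_prod_orderEmbOfFin hk]
    exact psiWeight_dichotomy_six _ (hsorted hk) (s.orderEmbOfFin hk).strictMono
  · right
    obtain ⟨t, hts, ht⟩ := exists_subset_card_eq hk
    calc ∏ p ∈ s, psiWeightSqDiv p ≤ ∏ p ∈ t, psiWeightSqDiv p :=
          prod_le_prod_of_subset_of_le_one hts (fun _ _ => by positivity)
            fun p _ _ => psiWeightSqDiv_le_one p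
      _ = ∏ i, psiWeightSqDiv (t.orderEmbOfFin ht i) := t.prod_eq_prod_orderEmbOfFin ht _
      _ ≤ 0.0607 ^ 2 := prod_psiWeightSqDiv_fin_seven_le _
          (fun i => hs _ (hts (t.orderEmbOfFin_mem ht i))) (t.orderEmbOfFin ht).strictMono

theorem sq_prod_psiWeight_eq {s : Finset ℕ} (hs : 0 ∉ s) :
    (∏ p ∈ s, psiWeight p) ^ 2 = (∏ p ∈ s, psiWeightSqDiv p) * ∏ p ∈ s, (p : ℝ) := by
  rw [← prod_pow, ← prod_mul_distrib]
  refine prod_congr rfl fun p hp => ?_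
  have : (p : ℝ) ≠ 0 := by exact_mod_cast ne_of_mem_of_not_mem hp hs
  field_simp

theorem two_pow_card_mul_sqrt_le_of_sq_prod_psiWeight_le {s : Finset ℕ} (hs : 0 ∉ s) {x c : ℝ}
    (hx : 0 ≤ x) (hc : 0 ≤ c) (h : (∏ p ∈ s, psiWeight p) ^ 2 ≤ c ^ 2 * x) :
    (2 : ℝ) ^ #s * √x ≤ c * (x * ∏ p ∈ s, (1 + 1 / (p : ℝ))) := by
  have hfactor : (2 : ℝ) ^ #s = (∏ p ∈ s, (1 + 1 / (p : ℝ))) * ∏ p ∈ s, psiWeight p := by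
    rw [← prod_const, ← prod_mul_distrib]
    refine prod_congr rfl fun p hp => ?_
    have : (p : ℝ) ≠ 0 := by exact_mod_cast ne_of_mem_of_not_mem hp hs
    field_simp
  have hle : ∏ p ∈ s, psiWeight p ≤ c * √x := by
    rw [← sqrt_sq hc, ← sqrt_mul (sq_nonneg c)]
    exact le_sqrt_of_sq_le h
  calc (2 : ℝ) ^ #s * √x
        = (∏ p ∈ s, (1 + 1 / (p : ℝ))) * (∏ p ∈ s, psiWeight p) * √x := by rw [hfactor]
    _ ≤ (∏ p ∈ s, (1 + 1 / (p : ℝ))) * (c * √x) * √x := by gcongr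
    _ = c * (x * ∏ p ∈ s, (1 + 1 / (p : ℝ))) := by
        rw [mul_assoc, mul_assoc, mul_self_sqrt hx]
        ring

/-- For every natural number `N ≥ 150000`, `2^{ω(N)} · √N ≤ 0.0607 · ψ(N)`, where `ω(N)` is
the number of distinct prime divisors of `N` and `ψ(N) = N · ∏_{p ∣ N} (1 + 1/p)`. -/
theorem two_pow_omega_mul_sqrt_le (N : ℕ) (hN : 150000 ≤ N) :
    (2 : ℝ) ^ N.primeFactors.card * Real.sqrt N
      ≤ 0.0607 * ((N : ℝ) * ∏ p ∈ N.primeFactors, (1 + 1 / (p : ℝ))) := by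
  have hprime : ∀ p ∈ N.primeFactors, p.Prime := fun _ => Nat.prime_of_mem_primeFactors
  have hzero : 0 ∉ N.primeFactors := fun h => Nat.not_prime_zero (hprime 0 h)
  refine two_pow_card_mul_sqrt_le_of_sq_prod_psiWeight_le hzero (Nat.cast_nonneg N)
    (by norm_num) ?_
  rcases psiWeight_dichotomy _ hprime with hsmall | hsparse
  · calc (∏ p ∈ N.primeFactors, psiWeight p) ^ 2 ≤ 23.5 ^ 2 := by gcongr
      _ ≤ 0.0607 ^ 2 * 150000 := by norm_num
      _ ≤ 0.0607 ^ 2 * N := by gcongr; exact_mod_cast hN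
  · rw [sq_prod_psiWeight_eq hzero]
    gcongr
    rw [← Nat.cast_prod]
    exact_mod_cast Nat.le_of_dvd (by omega) (Nat.prod_primeFactors_dvd N)
end
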